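/- With ρ = 5/4 − √17/4 and τ = 1/4 − √17/68, the function GT admits the singular expansion GT(z) = ρ − τ·√(1 − 8z) + O(1 − 8z) as z → 1/8 from below; that is, there exist constants C > 0 and δ > 0 such that for all real z with 1/8 − δ < z < 1/8, one has |GT(z) − ρ + τ·√(1 − 8z)| ≤ C·(1 − 8z). -/
import Mathlib


/-!
Singular expansion of the generating function of galled trees at `z = 1/8`.
-/

namespace GalledB2

/-- The exponential generating function of galled trees (closed form from
Bouvel–Gambette–Mansouri), for real `0 ≤ z < 1/8`. -/
noncomputable def GT (z : ℝ) : ℝ :=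
  -(Real.sqrt 2 *
      Real.sqrt (-4 * (Real.sqrt (1 - 8 * z) - 2) * z + 9 * Real.sqrt (1 - 8 * z) - 1)) /
      (4 * (1 - 8 * z) ^ ((1 : ℝ) / 4)) -
    (1 / 4) * Real.sqrt (1 - 8 * z) + 5 / 4

noncomputable def ρ : ℝ := 5 / 4 - Real.sqrt 17 / 4

noncomputable def τ : ℝ := 1 / 4 - Real.sqrt 17 / 68

/-- Closed-form simplification of `GT` in terms of `s = √(1 - 8z)`. -/
lemma GT_eq (z : ℝ) (hz0 : 0 < 1 - 8 * z) :
    GT z = 5 / 4 - Real.sqrt (1 - 8 * z) / 4 -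
      Real.sqrt ((Real.sqrt (1 - 8 * z)) ^ 2 - 2 * Real.sqrt (1 - 8 * z) + 17) / 4 := by
  set s := Real.sqrt (1 - 8 * z) with hsdef
  have hs0 : 0 < s := Real.sqrt_pos.mpr hz0
  have hs2 : s ^ 2 = 1 - 8 * z := Real.sq_sqrt hz0.le
  have hz : z = (1 - s ^ 2) / 8 := by linarith
  have hQ : -4 * (s - 2) * z + 9 * s - 1 = s * (s ^ 2 - 2 * s + 17) / 2 := by
    rw [hz]; ring
  have hq4 : (1 - 8 * z) ^ ((1 : ℝ) / 4) = Real.sqrt s := by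
    rw [← hs2]
    rw [Real.sqrt_eq_rpow]
    rw [← Real.rpow_natCast s 2, ← Real.rpow_mul hs0.le]
    norm_num
  have hQnn : 0 ≤ s ^ 2 - 2 * s + 17 := by nlinarith
  unfold GT
  rw [← hsdef, hQ, hq4]
  have h1 : Real.sqrt 2 * Real.sqrt (s * (s ^ 2 - 2 * s + 17) / 2)
      = Real.sqrt s * Real.sqrt (s ^ 2 - 2 * s + 17) := by
    rw [← Real.sqrt_mul (by norm_num : (0:ℝ) ≤ 2)]
    rw [show 2 * (s * (s ^ 2 - 2 * s + 17) / 2) = s * (s ^ 2 - 2 * s + 17) by ring]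
    exact Real.sqrt_mul hs0.le _
  rw [h1]
  have hss : Real.sqrt s ≠ 0 := ne_of_gt (Real.sqrt_pos.mpr hs0)
  field_simp
  ring

/-- Core polynomial inequality for the error bound. -/
lemma abs_err_le (s t q : ℝ) (hs0 : 0 < s) (hshalf : s < 1/2)
    (ht : t ^ 2 = 17) (ht4 : 4 ≤ t) (ht5 : t ≤ 5)
    (hq : q ^ 2 = s ^ 2 - 2 * s + 17) (hq4 : 4 ≤ q) :
    |t / 4 - q / 4 - t * s / 68| ≤ s ^ 2 := by
  have hkey : 17 - 17 * s ≤ t * q := by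
    nlinarith [sq_nonneg (t * q - (17 - 17 * s)),
      mul_pos (lt_of_lt_of_le (by norm_num) ht4) (lt_of_lt_of_le (by norm_num) hq4)]
  have hid : (t * q - 17 + 17 * s) * (t * q + 17 - 17 * s) = 272 * s * (2 - s) := by
    nlinarith [sq_nonneg (t * q)]
  rw [abs_le]
  constructor
  · nlinarith [hid, hkey, mul_pos hs0 hs0, sq_nonneg (t - q),
      mul_nonneg hs0.le (sub_nonneg.mpr hkey)]
  · nlinarith [hkey, mul_nonneg hs0.le (sub_nonneg.mpr hkey), sq_nonneg (t - q),
      mul_pos hs0 hs0]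

/-- **Theorem (singular expansion of `GT` at `z = 1/8`).**
`GT(z) = ρ − τ √(1 − 8z) + O(1 − 8z)` as `z → 1/8⁻`. -/
theorem GT_singular_expansion :
    ∃ C > (0 : ℝ), ∃ δ > (0 : ℝ), ∀ z : ℝ, 1 / 8 - δ < z → z < 1 / 8 →
      |GT z - ρ + τ * Real.sqrt (1 - 8 * z)| ≤ C * (1 - 8 * z) := by
  refine ⟨1, one_pos, 1/32, by norm_num, fun z h1 h2 => ?_⟩
  have hz0 : 0 < 1 - 8 * z := by linarith
  have hzlt : 1 - 8 * z < 1/4 := by linarith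
  set s := Real.sqrt (1 - 8 * z) with hsdef
  have hs0 : 0 < s := Real.sqrt_pos.mpr hz0
  have hs2 : s ^ 2 = 1 - 8 * z := Real.sq_sqrt hz0.le
  have hshalf : s < 1/2 := by nlinarith
  set q := Real.sqrt (s ^ 2 - 2 * s + 17) with hqdef
  have hQnn : 0 ≤ s ^ 2 - 2 * s + 17 := by nlinarith
  have hqnn : 0 ≤ q := Real.sqrt_nonneg _
  have hq2 : q ^ 2 = s ^ 2 - 2 * s + 17 := Real.sq_sqrt hQnn
  have hq4 : 4 ≤ q := by nlinarith
  have hq5 : q ≤ 5 := by nlinarith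
  set t := Real.sqrt 17 with htdef
  have htnn : 0 ≤ t := Real.sqrt_nonneg _
  have ht : t ^ 2 = 17 := Real.sq_sqrt (by norm_num)
  have ht4 : 4 ≤ t := by nlinarith
  have ht5 : t ≤ 5 := by nlinarith
  rw [GT_eq z hz0, ← hsdef, ← hqdef]
  have heq : 5 / 4 - s / 4 - q / 4 - ρ + τ * s = t / 4 - q / 4 - t * s / 68 := by
    rw [ρ, τ, ← htdef]; ring
  rw [heq, one_mul, ← hs2]
  exact abs_err_le s t q hs0 hshalf ht ht4 ht5 hq2 hq4

end GalledB2
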